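/- (Corollary 1, vector form) Let h be a random vector in ℂ^n and x, x̃ ∈ ℂ^n fixed, with H = Fh the discrete Fourier transform of h. If h * x and h * x̃ have the same distribution and E[H_k] ≠ 0 for every frequency index k, then x = x̃. -/

import Mathlib

/-! Applying the `k`-th Fourier coefficient to `h * x` and taking expectations gives
`E[H_k] X_k = E[H_k] X̃_k` by the convolution theorem, since equal distributions have equal means.
As `E[H_k] ≠ 0`, the transforms agree, and the DFT is injective: transported along
`Fin n ≃ ZMod n` it is Mathlib's `ZMod.dft`, a linear equivalence. -/

open MeasureTheory ProbabilityTheory Complex ENNReal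

/-- Circular convolution of two vectors in `ℂ^n`. -/
noncomputable def circConv {n : ℕ} (a b : Fin n → ℂ) : Fin n → ℂ :=
  fun k => ∑ j : Fin n, a j * b (k - j)

/-- Discrete Fourier transform on `ℂ^n`. -/
noncomputable def dft {n : ℕ} (x : Fin n → ℂ) : Fin n → ℂ :=
  fun k => ∑ j : Fin n,
    x j * Complex.exp (-2 * Real.pi * Complex.I * ((k : ℕ) : ℂ) * ((j : ℕ) : ℂ) / (n : ℂ))

open scoped ZMod

theorem AddChar.sum_sub_mul_mul_eq_mul {G R : Type*} [AddCommGroup G] [Fintype G] [CommRing R]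
    (ψ : AddChar G R) (a b : G → R) :
    ∑ m, (∑ j, a j * b (m - j)) * ψ m = (∑ j, a j * ψ j) * ∑ t, b t * ψ t := by
  calc ∑ m, (∑ j, a j * b (m - j)) * ψ m = ∑ j, ∑ m, a j * b (m - j) * ψ m := by
        simp only [Finset.sum_mul]
        exact Finset.sum_comm
    _ = ∑ j, ∑ t, a j * ψ j * (b t * ψ t) :=
        Finset.sum_congr rfl fun j _ => Fintype.sum_equiv (Equiv.subRight j) _ _ fun m => by
          rw [Equiv.subRight_apply, mul_mul_mul_comm, ← AddChar.map_add_eq_mul, add_sub_cancel]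
    _ = (∑ j, a j * ψ j) * ∑ t, b t * ψ t := (Finset.sum_mul_sum _ _ _ _).symm

theorem ZMod.finEquiv_apply {n : ℕ} [NeZero n] (j : Fin n) : ZMod.finEquiv n j = (j : ℕ) := by
  obtain ⟨m, rfl⟩ := Nat.exists_eq_add_one_of_ne_zero (NeZero.ne n)
  exact (Fin.cast_val_eq_self j).symm

noncomputable def dftChar (n : ℕ) [NeZero n] (k : Fin n) : AddChar (Fin n) ℂ :=
  ((ZMod.stdAddChar : AddChar (ZMod n) ℂ).mulShift (-ZMod.finEquiv n k)).compAddMonoidHom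
    (AddMonoidHom.mk' (ZMod.finEquiv n) (map_add _))

theorem dftChar_apply {n : ℕ} [NeZero n] (k j : Fin n) :
    dftChar n k j = ZMod.stdAddChar (-(ZMod.finEquiv n j * ZMod.finEquiv n k)) := by
  simp [dftChar, mul_comm]

theorem dft_apply_eq_sum_dftChar {n : ℕ} [NeZero n] (x : Fin n → ℂ) (k : Fin n) :
    dft x k = ∑ j, x j * dftChar n k j := by
  refine Finset.sum_congr rfl fun j _ => congrArg (x j * ·) ?_
  have hcast :
      -(ZMod.finEquiv n j * ZMod.finEquiv n k) = ((-((j : ℕ) * (k : ℕ)) : ℤ) : ZMod n) := by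
    rw [ZMod.finEquiv_apply, ZMod.finEquiv_apply]
    push_cast
    rfl
  rw [dftChar_apply, hcast, ZMod.stdAddChar_apply, ZMod.toCircle_intCast]
  congr 1
  push_cast
  ring

theorem dft_circConv {n : ℕ} (a b : Fin n → ℂ) (k : Fin n) :
    dft (circConv a b) k = dft a k * dft b k := by
  have := NeZero.of_pos k.pos
  simp only [dft_apply_eq_sum_dftChar, circConv]
  exact AddChar.sum_sub_mul_mul_eq_mul _ a b

theorem dft_eq_zmodDft_comp {n : ℕ} [NeZero n] (x : Fin n → ℂ) :
    dft x = 𝓕 (x ∘ (ZMod.finEquiv n).symm) ∘ ZMod.finEquiv n := by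
  ext k
  rw [dft_apply_eq_sum_dftChar, Function.comp_apply, ZMod.dft_apply]
  refine Fintype.sum_equiv (ZMod.finEquiv n).toEquiv _ _ fun j => ?_
  simp [dftChar_apply, mul_comm]

theorem dft_injective (n : ℕ) : Function.Injective (dft (n := n)) := by
  rcases eq_or_ne n 0 with rfl | hn
  · exact fun x y _ => Subsingleton.elim x y
  have := NeZero.mk hn
  intro x y hxy
  rw [dft_eq_zmodDft_comp, dft_eq_zmodDft_comp] at hxy
  have hdft := (ZMod.finEquiv n).surjective.injective_comp_right hxy
  exact (ZMod.finEquiv n).symm.surjective.injective_comp_right (ZMod.dft.injective hdft)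

theorem measurable_dft_apply {n : ℕ} (k : Fin n) :
    Measurable fun x : Fin n → ℂ => dft x k := by
  unfold dft
  fun_prop

theorem stmt6_general {Ω : Type*} [MeasurableSpace Ω] (μ : Measure Ω)
    {n : ℕ} (h : Ω → Fin n → ℂ) (x xt : Fin n → ℂ)
    (hE : ∀ k : Fin n, ∫ ω, dft (h ω) k ∂μ ≠ 0)
    (hid : IdentDistrib (fun ω => circConv (h ω) x) (fun ω => circConv (h ω) xt) μ μ) :
    x = xt := by
  refine dft_injective n (funext fun k => ?_)
  have hmean : ∫ ω, dft (circConv (h ω) x) k ∂μ = ∫ ω, dft (circConv (h ω) xt) k ∂μ :=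
    (hid.comp (measurable_dft_apply k)).integral_eq
  simp only [dft_circConv, integral_mul_const] at hmean
  exact mul_left_cancel₀ (hE k) hmean

/-- Corollary 1, vector form. -/
theorem stmt6 {Ω : Type*} [MeasurableSpace Ω] (μ : Measure Ω) [IsProbabilityMeasure μ]
    {n : ℕ} (h : Ω → Fin n → ℂ) (x xt : Fin n → ℂ)
    (hint : ∀ k : Fin n, Integrable (fun ω => dft (h ω) k) μ)
    (hE : ∀ k : Fin n, ∫ ω, dft (h ω) k ∂μ ≠ 0)
    (hid : IdentDistrib (fun ω => circConv (h ω) x) (fun ω => circConv (h ω) xt) μ μ) :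
    x = xt :=
  stmt6_general μ h x xt hE hid
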